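/- arXiv:2412.08512 — 8 statements merged into one kernel-verified Lean document; each statement's English description precedes it below -/
import Mathlib

section
/- Let q = p^e with p prime, let 0 ≤ k < e, and let A = F_q[X_1,…,X_ℓ]/⟨t_1(X_1),…,t_ℓ(X_ℓ)⟩ where each t_i(X_i) is a square-free polynomial in F_q[X_i]. Let λ be a unit of A satisfying λ^{p^e} = λ. If C is a λ-constacyclic code of length n over A, then its k-Galois dual C^{⊥k} is a λ^{−p^{e−k}}-constacyclic code of length n over A, i.e. C^{⊥k} is an A-submodule of A^n closed under the map (c_0,…,c_{n−1}) ↦ (λ^{−p^{e−k}} c_{n−1}, c_0,…,c_{n−2}). -/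
set_option synthInstance.maxHeartbeats 1000000
set_option maxHeartbeats 1000000

/-- The `k`-Galois dual (as a set) of a set of codewords `C ⊆ R^ι`,
with respect to the inner product `⟨u,v⟩ = ∑ i, u i * (v i)^pk`. -/
def galoisDualSet {R : Type*} [CommRing R] {ι : Type*} [Fintype ι]
    (pk : ℕ) (C : Set (ι → R)) : Set (ι → R) :=
  {v | ∀ c ∈ C, ∑ i, c i * v i ^ pk = 0}

/-- The `μ`-constacyclic shift `(c_0, …, c_{n-1}) ↦ (μ c_{n-1}, c_0, …, c_{n-2})`
on `R^n`, with coordinates indexed by `ZMod n`. -/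
def constaShift {R : Type*} [CommRing R] {n : ℕ} (μ : R) (c : ZMod n → R) :
    ZMod n → R :=
  fun i => if i = 0 then μ * c (i - 1) else c (i - 1)

/-- The affine algebra `F[X_1, …, X_ℓ] / ⟨t_1(X_1), …, t_ℓ(X_ℓ)⟩`. -/
abbrev AffineAlgebra {F : Type*} [Field F] {ℓ : ℕ} (t : Fin ℓ → Polynomial F) : Type _ :=
  MvPolynomial (Fin ℓ) F ⧸
    Ideal.span (Set.range fun i => Polynomial.aeval (MvPolynomial.X i : MvPolynomial (Fin ℓ) F) (t i))

/-!
Put `μ = λ⁻¹ ^ p ^ (e - k)`; then `μ ^ p ^ k = λ⁻¹` because `λ ^ p ^ e = λ`, and this makes the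
shifts `T_λ`, `T_μ` an isometry pair: `⟨T_λ d, T_μ x⟩_k = ⟨d, x⟩_k`. Since `T_λ ^ n = λ`, the shift
`T_λ` maps `C` onto itself, so every codeword is `T_λ d` with `d ∈ C`, and `T_μ` preserves the dual.
Additivity of the Frobenius makes the dual a submodule.
-/

open Finset

section ConstaShift

variable {R : Type*} [CommRing R] {n : ℕ}

lemma constaShift_apply (μ : R) (c : ZMod n → R) (i : ZMod n) :
    constaShift μ c i = (if i = 0 then μ else 1) * c (i - 1) := by
  unfold constaShift
  split_ifs <;> simp

lemma constaShift_smul (μ a : R) (c : ZMod n → R) :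
    constaShift μ (a • c) = a • constaShift μ c := by
  ext i
  simp only [constaShift_apply, Pi.smul_apply, smul_eq_mul]
  ring

lemma constaShift_iterate_apply (μ : R) (c : ZMod n → R) (m : ℕ) (i : ZMod n) :
    (constaShift μ)^[m] c i = (∏ j ∈ range m, if i - j = 0 then μ else 1) * c (i - m) := by
  induction m generalizing c with
  | zero => simp
  | succ m ih =>
    rw [Function.iterate_succ_apply, ih, constaShift_apply, prod_range_succ, Nat.cast_succ,
      ← sub_sub, mul_assoc]

lemma constaShift_iterate_self [NeZero n] (μ : R) (c : ZMod n → R) :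
    (constaShift μ)^[n] c = μ • c := by
  ext i
  have hμ : (∏ j ∈ range n, if i - j = 0 then μ else 1) = μ := by
    rw [prod_eq_single_of_mem i.val (mem_range.2 i.val_lt), ZMod.natCast_zmod_val, sub_self,
      if_pos rfl]
    intro j hj hji
    exact if_neg fun h => hji (by rw [sub_eq_zero.1 h, ZMod.val_natCast_of_lt (mem_range.1 hj)])
  rw [constaShift_iterate_apply, hμ, ZMod.natCast_self, sub_zero, Pi.smul_apply, smul_eq_mul]

/-- `constaShift u` has order `n` up to the scalar `u`, so it permutes any submodule it preserves. -/
lemma constaShift_surjOn [NeZero n] {u : Rˣ} {C : Submodule R (ZMod n → R)}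
    (hC : Set.MapsTo (constaShift (u : R)) (C : Set (ZMod n → R)) C) :
    Set.SurjOn (constaShift (u : R)) (C : Set (ZMod n → R)) C := by
  intro c hc
  refine ⟨(↑u⁻¹ : R) • (constaShift (u : R))^[n - 1] c, C.smul_mem _ (hC.iterate _ hc), ?_⟩
  rw [constaShift_smul, ← Function.iterate_succ_apply' (constaShift (u : R)),
    Nat.succ_eq_add_one, Nat.sub_one_add_one (NeZero.ne n), constaShift_iterate_self, smul_smul,
    Units.inv_mul, one_smul]

lemma sum_constaShift_mul_constaShift_pow [NeZero n] {μ ν : R} {m : ℕ} (h : μ * ν ^ m = 1)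
    (d x : ZMod n → R) :
    ∑ i, constaShift μ d i * constaShift ν x i ^ m = ∑ i, d i * x i ^ m :=
  calc ∑ i, constaShift μ d i * constaShift ν x i ^ m
      = ∑ i, d (i - 1) * x (i - 1) ^ m := by
        refine sum_congr rfl fun i _ => ?_
        simp only [constaShift_apply, mul_pow]
        split_ifs
        · linear_combination d (i - 1) * x (i - 1) ^ m * h
        · ring
    _ = ∑ i, d i * x i ^ m := Fintype.sum_equiv (Equiv.subRight 1) _ _ fun _ => rfl

lemma mapsTo_constaShift_galoisDualSet [NeZero n] {μ ν : R} {m : ℕ} (h : μ * ν ^ m = 1)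
    {C : Set (ZMod n → R)} (hC : Set.SurjOn (constaShift μ) C C) :
    Set.MapsTo (constaShift ν) (galoisDualSet m C) (galoisDualSet m C) := by
  intro x hx c hc
  obtain ⟨d, hd, rfl⟩ := hC hc
  rw [sum_constaShift_mul_constaShift_pow h]
  exact hx d hd

end ConstaShift

def galoisDual {R ι : Type*} [CommRing R] [Fintype ι] (p : ℕ) [ExpChar R p] (k : ℕ)
    (C : Set (ι → R)) : Submodule R (ι → R) where
  carrier := galoisDualSet (p ^ k) C
  zero_mem' _ _ := by simp [zero_pow (expChar_pow_pos R p k).ne']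
  add_mem' {v w} hv hw c hc := by
    simp only [Pi.add_apply, add_pow_expChar_pow, mul_add, sum_add_distrib, hv c hc, hw c hc,
      add_zero]
  smul_mem' a v hv c hc := by
    simp only [Pi.smul_apply, smul_eq_mul, mul_pow, mul_left_comm (c _), ← mul_sum, hv c hc,
      mul_zero]

lemma FiniteField.charP_of_card_eq_prime_pow {F : Type*} [Field F] [Fintype F] {p e : ℕ}
    (hp : p.Prime) (hcard : Fintype.card F = p ^ e) : CharP F p := by
  obtain ⟨p', hchar, m, hp', hcard'⟩ := FiniteField.card' F
  rwa [eq_of_prime_pow_eq hp'.prime hp.prime m.pos (hcard'.symm.trans hcard)] at hchar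

theorem stmt0_general {p e k ℓ n : ℕ} (hp : p.Prime) (hk : k < e) [NeZero n]
    {F : Type*} [Field F] [Fintype F] (hcard : Fintype.card F = p ^ e)
    (t : Fin ℓ → Polynomial F)
    (lam : (AffineAlgebra t)ˣ) (hlam : (lam : AffineAlgebra t) ^ p ^ e = lam)
    (C : Submodule (AffineAlgebra t) (ZMod n → AffineAlgebra t))
    (hC : ∀ c ∈ C, constaShift (lam : AffineAlgebra t) c ∈ C) :
    ∃ D : Submodule (AffineAlgebra t) (ZMod n → AffineAlgebra t),
      (D : Set (ZMod n → AffineAlgebra t)) =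
          galoisDualSet (p ^ k) (C : Set (ZMod n → AffineAlgebra t)) ∧
        ∀ x ∈ D,
          constaShift (((lam⁻¹ : (AffineAlgebra t)ˣ) : AffineAlgebra t) ^ p ^ (e - k)) x ∈ D := by
  set A := AffineAlgebra t
  -- `A` is the zero ring when some `t i` is a unit; there it has no characteristic `p`.
  rcases subsingleton_or_nontrivial A with hA | hA
  · exact ⟨⊤, (Set.eq_univ_of_forall fun _ _ _ => Subsingleton.elim _ _).symm,
      fun _ _ => Submodule.mem_top⟩
  have : Fact p.Prime := ⟨hp⟩
  have : CharP F p := FiniteField.charP_of_card_eq_prime_pow hp hcard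
  have : ExpChar A p := expChar_of_injective_algebraMap (algebraMap F A).injective p
  have hfrob : (lam : A) * (((lam⁻¹ : Aˣ) : A) ^ p ^ (e - k)) ^ p ^ k = 1 := by
    rw [← pow_mul, ← pow_add, Nat.sub_add_cancel hk.le]
    nth_rw 1 [← hlam]
    rw [← mul_pow, Units.mul_inv, one_pow]
  exact ⟨galoisDual p k C, rfl, mapsTo_constaShift_galoisDualSet hfrob (constaShift_surjOn hC)⟩

theorem stmt0 {p e k ℓ n : ℕ} (hp : p.Prime) (he : 0 < e) (hk : k < e) [NeZero n]
    {F : Type*} [Field F] [Fintype F] (hcard : Fintype.card F = p ^ e)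
    (t : Fin ℓ → Polynomial F) (ht : ∀ i, Squarefree (t i))
    (lam : (AffineAlgebra t)ˣ) (hlam : (lam : AffineAlgebra t) ^ p ^ e = lam)
    (C : Submodule (AffineAlgebra t) (ZMod n → AffineAlgebra t))
    (hC : ∀ c ∈ C, constaShift (lam : AffineAlgebra t) c ∈ C) :
    ∃ D : Submodule (AffineAlgebra t) (ZMod n → AffineAlgebra t),
      (D : Set (ZMod n → AffineAlgebra t)) =
          galoisDualSet (p ^ k) (C : Set (ZMod n → AffineAlgebra t)) ∧
        ∀ x ∈ D,
          constaShift (((lam⁻¹ : (AffineAlgebra t)ˣ) : AffineAlgebra t) ^ p ^ (e - k)) x ∈ D :=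
  stmt0_general hp hk hcard t lam hlam C hC
end

section
/- Let q = p^e with p prime, 0 ≤ k < e, and let l be the least even positive integer such that (e−k)·l is a multiple of lcm(e, e−k). Let λ ∈ F_q^* with r = ord(λ) dividing 1 + p^{e−k}, let n be a positive integer, and let C = ⟨g(x)⟩ be the λ-constacyclic code of length n over F_q generated by a monic divisor g(x) of x^n − λ in F_q[x]. Then C contains its k-Galois dual, i.e. C^{⊥k} ⊆ C, if and only if x^n − λ ≡ 0 (mod g(x)·g^{(l−1)#}(x)). -/
/-!
Write `X ^ n - C λ = g * h`. The sum `∑_{i<n} a_i b_i` is the coefficient of `X^(n-1)` in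
`a * reflect (n-1) b`, so every multiple of `h.reverse` of degree `< n` is orthogonal to every
multiple of `g` of degree `< n`. The Frobenius `x ↦ x^(p^k)` carries multiples of `h^#` to
multiples of `h.reverse`, and a dimension count then gives `C^{⊥k} = ⟨h^#⟩`; hence `C^{⊥k} ⊆ C`
iff `g ∣ h^#`. The operation `#` is multiplicative, and `f^{##}` is `f` with `x ↦ x^(p^(2(e-k)))`
applied to its coefficients, so `f^{l#} = f` for monic `f` with `f(0) ≠ 0` because
`e ∣ (e-k) l`. Therefore `g ∣ h^#` iff `g^{(l-1)#} ∣ h` iff `g * g^{(l-1)#} ∣ X ^ n - C λ`.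
-/

open Polynomial

/-- For `f(x) = Σ_{i=0}^m f_i x^i` of degree `m`, the polynomial
`f^#(x) = Σ_{i=0}^m f_0^{-p^(e-k)} f_i^{p^(e-k)} x^(m-i)`. -/
noncomputable def sharp (p e k : ℕ) {F : Type*} [Field F] (f : Polynomial F) :
    Polynomial F :=
  ∑ i ∈ Finset.range (f.natDegree + 1),
    Polynomial.C ((f.coeff 0)⁻¹ ^ p ^ (e - k) * f.coeff i ^ p ^ (e - k)) *
      Polynomial.X ^ (f.natDegree - i)

open Module

namespace Polynomial

section Semiring

variable {R : Type*} [Semiring R]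

lemma sum_range_coeff_mul_coeff (a b : R[X]) (N : ℕ) :
    ∑ i ∈ Finset.range (N + 1), a.coeff i * b.coeff i = (a * reflect N b).coeff N := by
  rw [coeff_mul, Finset.Nat.sum_antidiagonal_eq_sum_range_succ_mk]
  refine Finset.sum_congr rfl fun i hi => ?_
  rw [coeff_reflect, revAt_le (Nat.sub_le N i),
    Nat.sub_sub_self (Finset.mem_range_succ_iff.1 hi)]

lemma natDegree_reverse_of_coeff_zero_ne_zero {f : R[X]} (h0 : f.coeff 0 ≠ 0) :
    f.reverse.natDegree = f.natDegree := by
  rw [reverse_natDegree, natTrailingDegree_eq_zero.2 (Or.inr h0), Nat.sub_zero]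

lemma reverse_reverse_of_coeff_zero_ne_zero {f : R[X]} (h0 : f.coeff 0 ≠ 0) :
    f.reverse.reverse = f := by
  conv_lhs => rw [reverse, natDegree_reverse_of_coeff_zero_ne_zero h0]
  exact reflect_reflect

lemma reverse_map_of_injective {S : Type*} [Semiring S] {σ : R →+* S}
    (hσ : Function.Injective σ) (f : R[X]) : (f.map σ).reverse = f.reverse.map σ := by
  rw [reverse, reverse, natDegree_map_eq_of_injective hσ, reflect_map]

lemma Monic.mul_mem_degreeLT_iff {a t : R[X]} {n : ℕ} (ha : a.Monic) (han : a.natDegree ≤ n) :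
    a * t ∈ degreeLT R n ↔ t ∈ degreeLT R (n - a.natDegree) := by
  nontriviality R
  simp only [mem_degreeLT]
  rw [ha.degree_mul_comm, ha.degree_mul, degree_eq_natDegree ha.ne_zero]
  rcases eq_or_ne t 0 with rfl | ht
  · simp
  rw [degree_eq_natDegree ht]
  norm_cast
  omega

end Semiring

variable {F : Type*} [Field F]

lemma sum_range_coeff_mul_coeff_eq_zero {n : ℕ} {c : F} {g h a b : F[X]}
    (hgh : g * h = X ^ n - C c) (hh0 : h.coeff 0 ≠ 0) (hga : g ∣ a) (hhb : h.reverse ∣ b)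
    (ha : a ∈ degreeLT F n) (hb : b ∈ degreeLT F n) :
    ∑ i ∈ Finset.range n, a.coeff i * b.coeff i = 0 := by
  obtain ⟨s, rfl⟩ := hga
  obtain ⟨w, rfl⟩ := hhb
  rcases eq_or_ne (g * s) 0 with has | has
  · simp [has]
  rcases eq_or_ne w 0 with rfl | hw
  · simp
  have hh : h ≠ 0 := fun h0 => hh0 (by simp [h0])
  have hrev : h.reverse.natDegree = h.natDegree := natDegree_reverse_of_coeff_zero_ne_zero hh0
  have hn : g.natDegree + h.natDegree = n := by
    rw [← natDegree_mul (left_ne_zero_of_mul has) hh, hgh, natDegree_X_pow_sub_C]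
  have hdeg_a : g.natDegree + s.natDegree < n := by
    rw [← natDegree_mul (left_ne_zero_of_mul has) (right_ne_zero_of_mul has)]
    exact (natDegree_lt_iff_degree_lt has).2 (mem_degreeLT.1 ha)
  have hdeg_b : h.natDegree + w.natDegree < n := by
    have hb0 : h.reverse * w ≠ 0 := mul_ne_zero (mt reverse_eq_zero.1 hh) hw
    rw [← hrev, ← natDegree_mul (left_ne_zero_of_mul hb0) hw]
    exact (natDegree_lt_iff_degree_lt hb0).2 (mem_degreeLT.1 hb)
  obtain ⟨N, rfl⟩ : ∃ N, n = N + 1 := ⟨n - 1, by omega⟩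
  -- `reflect` turns `h.reverse` back into `h`, so `a * reflect N b` is `X ^ (N + 1) - C c`
  -- times a cofactor of degree `< N`.
  have hreflect : reflect N (h.reverse * w) = h * reflect (g.natDegree - 1) w := by
    rw [show N = h.natDegree + (g.natDegree - 1) by omega,
      reflect_mul _ _ hrev.le (by omega : w.natDegree ≤ g.natDegree - 1)]
    exact congrArg (· * _) reflect_reflect
  have hdeg_cofactor : (s * reflect (g.natDegree - 1) w).natDegree < N := by
    have := natDegree_reflect_le (N := g.natDegree - 1) (p := w)
    have := natDegree_mul_le (p := s) (q := reflect (g.natDegree - 1) w)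
    omega
  rw [sum_range_coeff_mul_coeff, hreflect,
    show g * s * (h * reflect (g.natDegree - 1) w) =
      (X ^ (N + 1) - C c) * (s * reflect (g.natDegree - 1) w) by rw [← hgh]; ring,
    sub_mul, coeff_sub, coeff_X_pow_mul', if_neg (by omega), coeff_C_mul,
    coeff_eq_zero_of_natDegree_lt hdeg_cofactor, mul_zero, sub_zero]

end Polynomial

section Codes

variable {F : Type*} [Field F] {n : ℕ}

noncomputable def codePoly (v : Fin n → F) : F[X] := ∑ i : Fin n, C (v i) * X ^ (i : ℕ)

lemma codePoly_eq_degreeLTEquiv_symm (v : Fin n → F) :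
    codePoly v = ((degreeLTEquiv F n).symm v : F[X]) := by
  simp [codePoly, degreeLTEquiv, C_mul_X_pow_eq_monomial]

lemma codePoly_mem_degreeLT (v : Fin n → F) : codePoly v ∈ degreeLT F n := by
  rw [codePoly_eq_degreeLTEquiv_symm]
  exact Subtype.property _

lemma coeff_codePoly (v : Fin n → F) (i : Fin n) : (codePoly v).coeff i = v i := by
  rw [codePoly_eq_degreeLTEquiv_symm]
  exact congrFun ((degreeLTEquiv F n).apply_symm_apply v) i

lemma codePoly_degreeLTEquiv (f : degreeLT F n) : codePoly (degreeLTEquiv F n f) = f := by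
  rw [codePoly_eq_degreeLTEquiv_symm, LinearEquiv.symm_apply_apply]

-- The code `⟨a⟩` of length `n`; as a set it is `{v | a ∣ codePoly v}` (`mem_polyCode`).
variable (n) in
noncomputable def polyCode (a : F[X]) : Submodule F (Fin n → F) :=
  ((Ideal.span {a}).restrictScalars F).comap
    ((degreeLT F n).subtype ∘ₗ (degreeLTEquiv F n).symm.toLinearMap)

lemma mem_polyCode {a : F[X]} {v : Fin n → F} : v ∈ polyCode n a ↔ a ∣ codePoly v := by
  simp [polyCode, Ideal.mem_span_singleton, codePoly_eq_degreeLTEquiv_symm]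

lemma finrank_polyCode {a : F[X]} (ha : a.Monic) (han : a.natDegree ≤ n) :
    finrank F (polyCode n a) = n - a.natDegree := by
  let ψ : degreeLT F (n - a.natDegree) →ₗ[F] Fin n → F :=
    (degreeLTEquiv F n).toLinearMap ∘ₗ
      (LinearMap.mulLeft F a ∘ₗ (degreeLT F _).subtype).codRestrict (degreeLT F n)
        fun t => (ha.mul_mem_degreeLT_iff han).2 t.2
  have hψ : Function.Injective ψ := fun t₁ t₂ h =>
    Subtype.ext <| mul_left_cancel₀ ha.ne_zero <|
      congrArg Subtype.val ((degreeLTEquiv F n).injective h)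
  have hrange : LinearMap.range ψ = polyCode n a := by
    ext v
    constructor
    · rintro ⟨t, rfl⟩
      exact mem_polyCode.2 ⟨t, codePoly_degreeLTEquiv _⟩
    · intro hv
      obtain ⟨t, ht⟩ := mem_polyCode.1 hv
      have hta : a * t ∈ degreeLT F n := ht ▸ codePoly_mem_degreeLT v
      refine ⟨⟨t, (ha.mul_mem_degreeLT_iff han).1 hta⟩, ?_⟩
      show degreeLTEquiv F n _ = v
      rw [← LinearEquiv.eq_symm_apply]
      exact Subtype.ext (ht.symm.trans (codePoly_eq_degreeLTEquiv_symm v))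
  rw [← hrange, LinearMap.finrank_range_of_inj hψ, (degreeLTEquiv F _).finrank_eq,
    finrank_fin_fun]

lemma natCard_galoisDualSet {pk : ℕ} (hpk : Function.Bijective fun x : F => x ^ pk)
    (M : Submodule F (Fin n → F)) :
    Nat.card (galoisDualSet pk (M : Set (Fin n → F))) = Nat.card F ^ (n - finrank F M) := by
  classical
  let φ : (Fin n → F) ≃ Module.Dual F (Fin n → F) :=
    (Equiv.piCongrRight fun _ => Equiv.ofBijective _ hpk).trans
      (dotProductEquiv F (Fin n)).toEquiv
  have hmem : ∀ v, v ∈ galoisDualSet pk (M : Set (Fin n → F)) ↔ φ v ∈ M.dualAnnihilator :=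
    fun v => by simp [galoisDualSet, Submodule.mem_dualAnnihilator, φ, dotProduct, mul_comm]
  rw [Nat.card_congr (φ.subtypeEquiv hmem), Module.natCard_eq_pow_finrank (K := F)]
  have := Subspace.finrank_add_finrank_dualAnnihilator_eq M
  rw [finrank_fin_fun] at this
  congr 1
  omega

lemma polyCode_le_polyCode_iff {a b : F[X]} (hb : b.Monic)
    (hab : a.natDegree + b.natDegree ≤ n) :
    polyCode n a ≤ polyCode n b ↔ b ∣ a := by
  refine ⟨fun hle => ?_, fun hba v hv => mem_polyCode.2 (hba.trans (mem_polyCode.1 hv))⟩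
  rcases Nat.eq_zero_or_pos b.natDegree with hb0 | hb0
  · rw [hb.natDegree_eq_zero.1 hb0]
    exact one_dvd a
  have ha : a ∈ degreeLT F n :=
    mem_degreeLT.2 (degree_le_natDegree.trans_lt (by exact_mod_cast (by omega : a.natDegree < n)))
  have hmem : degreeLTEquiv F n ⟨a, ha⟩ ∈ polyCode n a := by
    rw [mem_polyCode, codePoly_degreeLTEquiv]
  simpa only [mem_polyCode, codePoly_degreeLTEquiv] using hle hmem

end Codes

lemma iterateFrobenius_eq_id_of_dvd {R : Type*} [CommSemiring R] {p : ℕ} [ExpChar R p] {e : ℕ}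
    (hfrob : ∀ x : R, x ^ p ^ e = x) {m : ℕ} (hm : e ∣ m) :
    iterateFrobenius R p m = RingHom.id R := by
  obtain ⟨t, rfl⟩ := hm
  have h1 : iterateFrobenius R p e = RingHom.id R := RingHom.ext hfrob
  refine DFunLike.coe_injective ?_
  rw [coe_iterateFrobenius_mul, h1, RingHom.coe_id, Function.iterate_id]

section Sharp

variable {F : Type*} [Field F] {p : ℕ} [ExpChar F p]

variable (e k : ℕ)

lemma sharp_eq (f : F[X]) :
    sharp p e k f = C (iterateFrobenius F p (e - k) (f.coeff 0))⁻¹ *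
      (f.map (iterateFrobenius F p (e - k))).reverse := by
  ext j
  rw [sharp, finsetSum_coeff]
  simp only [coeff_C_mul, coeff_X_pow, coeff_reverse, natDegree_map, coeff_map,
    iterateFrobenius_def]
  by_cases hj : j ≤ f.natDegree
  · rw [Finset.sum_eq_single (f.natDegree - j)]
    · rw [if_pos (by omega), mul_one, revAt_le hj, inv_pow]
    · intro i hi hij
      rw [Finset.mem_range] at hi
      rw [if_neg (by omega), mul_zero]
    · intro hmem
      exact absurd (Finset.mem_range.2 (by omega)) hmem
  · rw [revAt_eq_self_of_lt (by omega),
      coeff_eq_zero_of_natDegree_lt (show f.natDegree < j by omega),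
      zero_pow (pow_ne_zero _ (expChar_ne_zero F p)), mul_zero]
    refine Finset.sum_eq_zero fun i hi => ?_
    rw [Finset.mem_range] at hi
    rw [if_neg (by omega), mul_zero]

lemma sharp_mul (f g : F[X]) : sharp p e k (f * g) = sharp p e k f * sharp p e k g := by
  simp only [sharp_eq, mul_coeff_zero, map_mul, Polynomial.map_mul, reverse_mul_of_domain,
    mul_inv]
  ring

lemma sharp_dvd_sharp {f g : F[X]} (h : f ∣ g) : sharp p e k f ∣ sharp p e k g := by
  obtain ⟨u, rfl⟩ := h
  rw [sharp_mul]
  exact dvd_mul_right _ _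

lemma sharp_iterate_dvd_sharp_iterate {f g : F[X]} (h : f ∣ g) (j : ℕ) :
    (sharp p e k)^[j] f ∣ (sharp p e k)^[j] g := by
  induction j with
  | zero => exact h
  | succ j ih =>
    rw [Function.iterate_succ_apply', Function.iterate_succ_apply']
    exact sharp_dvd_sharp e k ih

lemma dvd_sharp_iff_sharp_iterate_dvd {l : ℕ} (hl : 0 < l) {f g : F[X]}
    (hf : (sharp p e k)^[l] f = f) (hg : (sharp p e k)^[l] g = g) :
    f ∣ sharp p e k g ↔ (sharp p e k)^[l - 1] f ∣ g := by
  obtain ⟨m, rfl⟩ : ∃ m, l = m + 1 := ⟨l - 1, by omega⟩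
  rw [Nat.add_sub_cancel]
  constructor
  · intro h
    have := sharp_iterate_dvd_sharp_iterate (p := p) e k h m
    rwa [← Function.iterate_succ_apply, hg] at this
  · intro h
    rw [← hf, Function.iterate_succ_apply']
    exact sharp_dvd_sharp e k h

lemma natDegree_sharp {f : F[X]} (h0 : f.coeff 0 ≠ 0) :
    (sharp p e k f).natDegree = f.natDegree := by
  have hτ0 : iterateFrobenius F p (e - k) (f.coeff 0) ≠ 0 := by
    rwa [_root_.map_ne_zero]
  rw [sharp_eq, natDegree_C_mul (inv_ne_zero hτ0),
    natDegree_reverse_of_coeff_zero_ne_zero (by rwa [coeff_map]), natDegree_map]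

lemma coeff_zero_sharp {f : F[X]} (hf : f.Monic) :
    (sharp p e k f).coeff 0 = (iterateFrobenius F p (e - k) (f.coeff 0))⁻¹ := by
  rw [sharp_eq, coeff_C_mul, coeff_zero_reverse, (hf.map _).leadingCoeff, mul_one]

lemma monic_sharp {f : F[X]} (h0 : f.coeff 0 ≠ 0) : (sharp p e k f).Monic := by
  have hτ0 : iterateFrobenius F p (e - k) (f.coeff 0) ≠ 0 := by
    rwa [_root_.map_ne_zero]
  rw [Monic, sharp_eq, leadingCoeff_mul, leadingCoeff_C, reverse_leadingCoeff, trailingCoeff,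
    natTrailingDegree_eq_zero.2 (Or.inr (by rwa [coeff_map])), coeff_map, inv_mul_cancel₀ hτ0]

lemma sharp_sharp {f : F[X]} (hf : f.Monic) (h0 : f.coeff 0 ≠ 0) :
    sharp p e k (sharp p e k f) = f.map (iterateFrobenius F p ((e - k) + (e - k))) := by
  set τ := iterateFrobenius F p (e - k)
  have hττ : τ (τ (f.coeff 0)) ≠ 0 := by simpa [_root_.map_ne_zero] using h0
  rw [iterateFrobenius_add, ← Polynomial.map_map]
  calc sharp p e k (sharp p e k f)
      = C (τ (τ (f.coeff 0))) *
          (C (τ (τ (f.coeff 0)))⁻¹ * ((f.map τ).map τ).reverse.reverse) := by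
        rw [sharp_eq e k (sharp p e k f), coeff_zero_sharp e k hf, map_inv₀ τ, inv_inv,
          sharp_eq e k f, Polynomial.map_mul, map_C, map_inv₀ τ,
          ← reverse_map_of_injective τ.injective, reverse_mul_of_domain, reverse_C]
    _ = (f.map τ).map τ := by
        rw [reverse_reverse_of_coeff_zero_ne_zero (by simpa using hττ), ← mul_assoc, ← C_mul,
          mul_inv_cancel₀ hττ, C_1, one_mul]

lemma sharp_iterate_two_mul {f : F[X]} (hf : f.Monic) (h0 : f.coeff 0 ≠ 0) (j : ℕ) :
    (sharp p e k)^[2 * j] f = f.map (iterateFrobenius F p (j * ((e - k) + (e - k)))) := by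
  induction j with
  | zero => simp [iterateFrobenius_zero]
  | succ j ih =>
    rw [Nat.mul_succ, add_comm, Function.iterate_add_apply, ih]
    change sharp p e k (sharp p e k _) = _
    rw [sharp_sharp e k (hf.map _) (by rwa [coeff_map, _root_.map_ne_zero]), Polynomial.map_map,
      ← iterateFrobenius_add, Nat.succ_mul, add_comm]

lemma sharp_iterate_eq_self (hfrob : ∀ x : F, x ^ p ^ e = x) {f : F[X]} (hf : f.Monic)
    (h0 : f.coeff 0 ≠ 0) {l : ℕ} (hl : Even l) (hel : e ∣ (e - k) * l) :
    (sharp p e k)^[l] f = f := by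
  obtain ⟨j, rfl⟩ := hl
  rw [← two_mul, sharp_iterate_two_mul e k hf h0,
    iterateFrobenius_eq_id_of_dvd hfrob (by convert hel using 1; ring), Polynomial.map_id]

lemma map_sharp (hfrob : ∀ x : F, x ^ p ^ e = x) (hk : k ≤ e) (f : F[X]) :
    (sharp p e k f).map (iterateFrobenius F p k) = C (f.coeff 0)⁻¹ * f.reverse := by
  have hid : (iterateFrobenius F p k).comp (iterateFrobenius F p (e - k)) = RingHom.id F := by
    rw [← iterateFrobenius_add, Nat.add_sub_cancel' hk,
      iterateFrobenius_eq_id_of_dvd hfrob dvd_rfl]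
  rw [sharp_eq, Polynomial.map_mul, map_C, map_inv₀, ← RingHom.comp_apply, hid,
    ← reverse_map_of_injective (iterateFrobenius F p k).injective, Polynomial.map_map, hid,
    Polynomial.map_id, RingHom.id_apply]

end Sharp

section GaloisDual

variable {F : Type*} [Field F] {p : ℕ} [ExpChar F p] (e k : ℕ) {n : ℕ}

lemma polyCode_sharp_subset_galoisDualSet (hfrob : ∀ x : F, x ^ p ^ e = x) (hk : k ≤ e) {c : F}
    {g h : F[X]} (hgh : g * h = X ^ n - C c) (hh0 : h.coeff 0 ≠ 0) :
    (polyCode n (sharp p e k h) : Set (Fin n → F)) ⊆ galoisDualSet (p ^ k) (polyCode n g) := by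
  intro v hv u hu
  let b := (codePoly v).map (iterateFrobenius F p k)
  have hb : b ∈ degreeLT F n :=
    mem_degreeLT.2 (degree_map_le.trans_lt (mem_degreeLT.1 (codePoly_mem_degreeLT v)))
  have hhb : h.reverse ∣ b := by
    have := Polynomial.map_dvd (iterateFrobenius F p k) (mem_polyCode.1 hv)
    rwa [map_sharp e k hfrob hk, (isUnit_C.2 (inv_ne_zero hh0).isUnit).mul_left_dvd] at this
  have := sum_range_coeff_mul_coeff_eq_zero hgh hh0 (mem_polyCode.1 hu) hhb
    (codePoly_mem_degreeLT u) hb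
  rw [Finset.sum_range] at this
  simpa [b, coeff_map, coeff_codePoly, iterateFrobenius_def] using this

lemma galoisDualSet_polyCode [Finite F] (hfrob : ∀ x : F, x ^ p ^ e = x) (hk : k ≤ e) {c : F}
    {g h : F[X]} (hg : g.Monic) (hh0 : h.coeff 0 ≠ 0) (hgh : g * h = X ^ n - C c) :
    galoisDualSet (p ^ k) (polyCode n g : Set (Fin n → F)) = polyCode n (sharp p e k h) := by
  have hdeg : g.natDegree + h.natDegree = n := by
    rw [← natDegree_mul hg.ne_zero fun h0 => hh0 (by simp [h0]), hgh, natDegree_X_pow_sub_C]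
  have hbij : Function.Bijective fun x : F => x ^ p ^ k :=
    Finite.injective_iff_bijective.1 (iterateFrobenius F p k).injective
  refine (Set.eq_of_subset_of_ncard_le (polyCode_sharp_subset_galoisDualSet e k hfrob hk hgh hh0)
    (le_of_eq ?_) (Set.toFinite _)).symm
  rw [← Nat.card_coe_set_eq, ← Nat.card_coe_set_eq, natCard_galoisDualSet hbij,
    SetLike.coe_sort_coe,
    Module.natCard_eq_pow_finrank (K := F) (V := polyCode n (sharp p e k h)),
    finrank_polyCode hg (by omega),
    finrank_polyCode (monic_sharp e k hh0) (by rw [natDegree_sharp e k hh0]; omega),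
    natDegree_sharp e k hh0]
  congr 1
  omega

end GaloisDual

theorem stmt2_general {p e k n l : ℕ} (hp : p.Prime) (hk : k < e) (hn : 0 < n)
    {F : Type*} [Field F] [Fintype F] (hcard : Fintype.card F = p ^ e)
    (lam : F) (hlam : lam ≠ 0)
    (hl : IsLeast {m : ℕ | 0 < m ∧ Even m ∧ Nat.lcm e (e - k) ∣ (e - k) * m} l)
    (g : Polynomial F) (hg : g.Monic) (hgd : g ∣ X ^ n - Polynomial.C lam) :
    galoisDualSet (p ^ k)
          {c : Fin n → F | g ∣ ∑ i : Fin n, Polynomial.C (c i) * X ^ (i : ℕ)} ⊆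
        {c : Fin n → F | g ∣ ∑ i : Fin n, Polynomial.C (c i) * X ^ (i : ℕ)} ↔
      g * (sharp p e k)^[l - 1] g ∣ X ^ n - Polynomial.C lam := by
  have := Fact.mk hp
  have := charP_of_card_eq_prime_pow hcard
  have : ExpChar F p := ExpChar.prime hp
  have hfrob : ∀ x : F, x ^ p ^ e = x := fun x => hcard ▸ FiniteField.pow_card x
  obtain ⟨⟨hl0, hl_even, hl_lcm⟩, -⟩ := hl
  have hel : e ∣ (e - k) * l := (Nat.dvd_lcm_left e (e - k)).trans hl_lcm
  obtain ⟨h, hgh⟩ := hgd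
  replace hgh := hgh.symm
  have hh : h.Monic := hg.of_mul_monic_left (hgh ▸ monic_X_pow_sub_C lam hn.ne')
  have h00 : g.coeff 0 * h.coeff 0 ≠ 0 := by
    rw [← mul_coeff_zero, hgh]
    simpa [hn.ne] using hlam
  have hg0 := left_ne_zero_of_mul h00
  have hh0 := right_ne_zero_of_mul h00
  have hdeg : (sharp p e k h).natDegree + g.natDegree = n := by
    rw [natDegree_sharp e k hh0, add_comm, ← natDegree_mul hg.ne_zero hh.ne_zero, hgh,
      natDegree_X_pow_sub_C]
  have hcode : {c : Fin n → F | g ∣ ∑ i : Fin n, C (c i) * X ^ (i : ℕ)} = polyCode n g :=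
    Set.ext fun _ => mem_polyCode.symm
  rw [hcode, galoisDualSet_polyCode e k hfrob hk.le hg hh0 hgh, SetLike.coe_subset_coe,
    polyCode_le_polyCode_iff hg hdeg.le,
    dvd_sharp_iff_sharp_iterate_dvd e k hl0 (sharp_iterate_eq_self e k hfrob hg hg0 hl_even hel)
      (sharp_iterate_eq_self e k hfrob hh hh0 hl_even hel),
    ← hgh, mul_dvd_mul_iff_left hg.ne_zero]

theorem stmt2 {p e k n l : ℕ} (hp : p.Prime) (he : 0 < e) (hk : k < e) (hn : 0 < n)
    {F : Type*} [Field F] [Fintype F] (hcard : Fintype.card F = p ^ e)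
    (lam : F) (hlam : lam ≠ 0) (hr : orderOf lam ∣ 1 + p ^ (e - k))
    (hl : IsLeast {m : ℕ | 0 < m ∧ Even m ∧ Nat.lcm e (e - k) ∣ (e - k) * m} l)
    (g : Polynomial F) (hg : g.Monic) (hgd : g ∣ X ^ n - Polynomial.C lam) :
    galoisDualSet (p ^ k)
          {c : Fin n → F | g ∣ ∑ i : Fin n, Polynomial.C (c i) * X ^ (i : ℕ)} ⊆
        {c : Fin n → F | g ∣ ∑ i : Fin n, Polynomial.C (c i) * X ^ (i : ℕ)} ↔
      g * (sharp p e k)^[l - 1] g ∣ X ^ n - Polynomial.C lam :=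
  stmt2_general hp hk hn hcard lam hlam hl g hg hgd
end

section
/- Let q = p^e with p prime, 0 ≤ k < e, and let R = F_q^N be the product ring with componentwise operations. For an R-submodule C ⊆ R^n and each index S ∈ {1,…,N}, let π_S : R^n → F_q^n be the map taking the S-th component in every coordinate, and let C_S = π_S(C). Then π_S(C^{⊥k,R}) = (C_S)^{⊥k}, where C^{⊥k,R} = {ρ' ∈ R^n : Σ_{i=0}^{n−1} c_i (ρ'_i)^{p^k} = 0 in R for all c ∈ C} and (C_S)^{⊥k} is the k-Galois dual of C_S in F_q^n. -/
section GaloisDualPi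

variable {R ι σ : Type*} [CommRing R] [Fintype ι] {pk : ℕ}

theorem zero_mem_galoisDualSet (hpk : pk ≠ 0) (C : Set (ι → R)) :
    0 ∈ galoisDualSet pk C := by
  simp [galoisDualSet, zero_pow hpk]

theorem mem_galoisDualSet_pi_iff (C : Set (ι → σ → R)) (ρ : ι → σ → R) :
    ρ ∈ galoisDualSet pk C ↔
      ∀ s, (fun i => ρ i s) ∈ galoisDualSet pk ((fun c i => c i s) '' C) := by
  simp only [galoisDualSet, Set.mem_ofPred_eq, Set.forall_mem_image, funext_iff,
    Finset.sum_apply, Pi.mul_apply, Pi.pow_apply, Pi.zero_apply]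
  exact ⟨fun h s c hc => h c hc s, fun h c hc s => h s hc⟩

theorem image_eval_galoisDualSet_pi [DecidableEq σ] (hpk : pk ≠ 0)
    (C : Set (ι → σ → R)) (s : σ) :
    (fun ρ i => ρ i s) '' galoisDualSet pk C =
      galoisDualSet pk ((fun c i => c i s) '' C) := by
  ext v
  constructor
  · rintro ⟨ρ, hρ, rfl⟩
    exact (mem_galoisDualSet_pi_iff C ρ).1 hρ s
  · intro hv
    -- Extend `v` by zero in the other coordinates, which are orthogonal to everything as `0 ^ pk = 0`.
    refine ⟨fun i => Pi.single s (v i), (mem_galoisDualSet_pi_iff C _).2 fun t => ?_, ?_⟩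
    · obtain rfl | hts := eq_or_ne t s
      · simpa using hv
      · simp only [Pi.single_eq_of_ne hts]
        exact zero_mem_galoisDualSet hpk _
    · simp

end GaloisDualPi

theorem stmt8_general {p k N n : ℕ} (hp : p.Prime)
    {F : Type*} [Field F]
    (C : Submodule (Fin N → F) (Fin n → Fin N → F)) (S : Fin N) :
    (fun ρ : Fin n → Fin N → F => fun i => ρ i S) ''
        galoisDualSet (p ^ k) (C : Set (Fin n → Fin N → F)) =
      galoisDualSet (p ^ k)
        ((fun ρ : Fin n → Fin N → F => fun i => ρ i S) ''
          (C : Set (Fin n → Fin N → F))) :=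
  image_eval_galoisDualSet_pi (pow_ne_zero k hp.ne_zero) (C : Set (Fin n → Fin N → F)) S

theorem stmt8 {p e k N n : ℕ} (hp : p.Prime) (he : 0 < e) (hk : k < e)
    {F : Type*} [Field F] [Fintype F] (hcard : Fintype.card F = p ^ e)
    (C : Submodule (Fin N → F) (Fin n → Fin N → F)) (S : Fin N) :
    (fun ρ : Fin n → Fin N → F => fun i => ρ i S) ''
        galoisDualSet (p ^ k) (C : Set (Fin n → Fin N → F)) =
      galoisDualSet (p ^ k)
        ((fun ρ : Fin n → Fin N → F => fun i => ρ i S) ''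
          (C : Set (Fin n → Fin N → F))) :=
  stmt8_general hp C S
end

section
/- Let q = p^e with p prime, 0 ≤ k < e, and let R = F_q^N be the product ring with componentwise operations. For an R-submodule C ⊆ R^n and each index S ∈ {1,…,N}, let π_S : R^n → F_q^n take the S-th component in every coordinate and C_S = π_S(C). Then π_S(C ∩ C^{⊥k,R}) = C_S ∩ (C_S)^{⊥k}; that is, the projection of the k-Galois hull of C equals the k-Galois hull of the projection C_S. -/
theorem sum_mul_smul_pow_of_isIdempotentElem {R ι : Type*} [CommRing R] [Fintype ι] {e : R}
    (he : IsIdempotentElem e) {pk : ℕ} (hpk : pk ≠ 0) (c x : ι → R) :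
    ∑ i, c i * (e • x) i ^ pk = e * ∑ i, c i * x i ^ pk := by
  simp only [Pi.smul_apply, smul_eq_mul, mul_pow, he.pow_eq hpk, Finset.mul_sum]
  exact Finset.sum_congr rfl fun i _ => by ring

theorem Pi.isIdempotentElem_single_one {κ : Type*} [DecidableEq κ] {F : κ → Type*}
    [∀ j, MulZeroOneClass (F j)] (S : κ) : IsIdempotentElem (Pi.single S 1 : ∀ j, F j) := by
  rw [IsIdempotentElem, ← Pi.single_mul, mul_one]

section Projection

variable {ι κ F : Type*} [Fintype ι] [CommRing F]

theorem sum_mul_pow_apply (pk : ℕ) (c x : ι → κ → F) (S : κ) :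
    (∑ i, c i * x i ^ pk) S = ∑ i, c i S * x i S ^ pk := by
  simp only [Finset.sum_apply, Pi.mul_apply, Pi.pow_apply]

theorem image_inter_galoisDualSet_subset (pk : ℕ) (C : Set (ι → κ → F)) (S : κ) :
    (fun ρ : ι → κ → F => fun i => ρ i S) '' (C ∩ galoisDualSet pk C) ⊆
      ((fun ρ : ι → κ → F => fun i => ρ i S) '' C) ∩
        galoisDualSet pk ((fun ρ : ι → κ → F => fun i => ρ i S) '' C) := by
  rintro _ ⟨ρ, ⟨hρC, hρD⟩, rfl⟩
  refine ⟨⟨ρ, hρC, rfl⟩, ?_⟩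
  rintro _ ⟨c, hcC, rfl⟩
  rw [← sum_mul_pow_apply, hρD c hcC, Pi.zero_apply]

theorem inter_galoisDualSet_subset_image [DecidableEq κ] {pk : ℕ} (hpk : pk ≠ 0)
    (C : Submodule (κ → F) (ι → κ → F)) (S : κ) :
    ((fun ρ : ι → κ → F => fun i => ρ i S) '' C) ∩
        galoisDualSet pk ((fun ρ : ι → κ → F => fun i => ρ i S) '' C) ⊆
      (fun ρ : ι → κ → F => fun i => ρ i S) '' ((C : Set (ι → κ → F)) ∩ galoisDualSet pk C) := by
  rintro _ ⟨⟨x, hxC, rfl⟩, hxD⟩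
  have he : IsIdempotentElem (Pi.single S 1 : κ → F) := Pi.isIdempotentElem_single_one S
  refine ⟨Pi.single S 1 • x, ⟨C.smul_mem _ hxC, fun c hcC => ?_⟩, ?_⟩
  · rw [sum_mul_smul_pow_of_isIdempotentElem he hpk, ← Pi.single_mul_left, sum_mul_pow_apply,
      hxD _ ⟨c, hcC, rfl⟩, mul_zero, Pi.single_zero]
  · funext i
    simp

end Projection

theorem stmt9_general {p k N n : ℕ} (hp : p.Prime)
    {F : Type*} [Field F]
    (C : Submodule (Fin N → F) (Fin n → Fin N → F)) (S : Fin N) :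
    (fun ρ : Fin n → Fin N → F => fun i => ρ i S) ''
        ((C : Set (Fin n → Fin N → F)) ∩
          galoisDualSet (p ^ k) (C : Set (Fin n → Fin N → F))) =
      ((fun ρ : Fin n → Fin N → F => fun i => ρ i S) ''
          (C : Set (Fin n → Fin N → F))) ∩
        galoisDualSet (p ^ k)
          ((fun ρ : Fin n → Fin N → F => fun i => ρ i S) ''
            (C : Set (Fin n → Fin N → F))) :=
  (image_inter_galoisDualSet_subset _ _ S).antisymm
    (inter_galoisDualSet_subset_image (pow_ne_zero k hp.ne_zero) C S)

theorem stmt9 {p e k N n : ℕ} (hp : p.Prime) (he : 0 < e) (hk : k < e)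
    {F : Type*} [Field F] [Fintype F] (hcard : Fintype.card F = p ^ e)
    (C : Submodule (Fin N → F) (Fin n → Fin N → F)) (S : Fin N) :
    (fun ρ : Fin n → Fin N → F => fun i => ρ i S) ''
        ((C : Set (Fin n → Fin N → F)) ∩
          galoisDualSet (p ^ k) (C : Set (Fin n → Fin N → F))) =
      ((fun ρ : Fin n → Fin N → F => fun i => ρ i S) ''
          (C : Set (Fin n → Fin N → F))) ∩
        galoisDualSet (p ^ k)
          ((fun ρ : Fin n → Fin N → F => fun i => ρ i S) ''
            (C : Set (Fin n → Fin N → F))) :=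
  stmt9_general hp C S
end

section
/- Let q = p^e with p prime, 0 ≤ k < e, and let R = F_q^N be the product ring with componentwise operations. Let C ⊆ R^n be an R-submodule, and for each S ∈ {1,…,N} let C_S = π_S(C) where π_S : R^n → F_q^n takes the S-th component in every coordinate. Then C is k-Galois self-dual over R (i.e. C = C^{⊥k,R}) if and only if for every S, the linear code C_S ⊆ F_q^n is k-Galois self-dual (i.e. C_S = (C_S)^{⊥k}). -/
/-
Transposing `(F^N)^n` into `(F^n)^N` (`Function.swap`), an `(F^N)`-submodule `C` becomes the
product of its projections `C_S`, because multiplying by the idempotent `Pi.single S 1` keeps the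
`S`-th slice of a codeword and kills the others. The Galois form on `(F^N)^n` is computed
componentwise, so the dual of `C` becomes the product of the duals of the `C_S`. Two products
of nonempty sets agree exactly when their factors do.
-/

theorem Set.univ_pi_eq_univ_pi_iff {σ : Type*} {α : σ → Type*} {t₁ t₂ : ∀ S, Set (α S)}
    (ht₁ : ∀ S, (t₁ S).Nonempty) : Set.univ.pi t₁ = Set.univ.pi t₂ ↔ t₁ = t₂ := by
  refine ⟨fun h => funext fun S => ?_, fun h => h ▸ rfl⟩
  have hne : (Set.univ.pi t₁).Nonempty := Set.univ_pi_nonempty_iff.2 ht₁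
  calc t₁ S = Function.eval S '' Set.univ.pi t₁ := (Set.eval_image_univ_pi hne).symm
    _ = t₂ S := by rw [h, Set.eval_image_univ_pi (h ▸ hne)]

theorem galoisDualSet_eq_swap_preimage_pi {ι σ F : Type*} [Fintype ι] [CommRing F] (pk : ℕ)
    (C : Set (ι → σ → F)) :
    galoisDualSet pk C =
      Function.swap (φ := fun _ _ => F) ⁻¹'
        Set.univ.pi fun S => galoisDualSet pk ((Function.swap · S) '' C) := by
  ext v
  simp only [galoisDualSet, Set.mem_preimage, Set.mem_univ_pi, Set.mem_ofPred_eq,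
    Set.forall_mem_image, funext_iff, Finset.sum_apply, Pi.mul_apply, Pi.pow_apply,
    Pi.zero_apply, Function.swap]
  exact ⟨fun h S c hc => h c hc S, fun h c hc S => h S hc⟩

theorem Submodule.coe_eq_swap_preimage_pi {ι σ F : Type*} [Fintype σ] [DecidableEq σ]
    [Semiring F] (C : Submodule (σ → F) (ι → σ → F)) :
    (C : Set (ι → σ → F)) =
      Function.swap (φ := fun _ _ => F) ⁻¹'
        Set.univ.pi fun S => (Function.swap · S) '' (C : Set (ι → σ → F)) := by
  refine subset_antisymm (fun v hv S _ => ⟨v, hv, rfl⟩) fun v hv => ?_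
  choose c hc hcv using fun S => hv S (Set.mem_univ S)
  have hv_sum : v = ∑ S, (Pi.single S 1 : σ → F) • c S := by
    funext i T
    simp [Finset.sum_apply, Pi.single_apply, ← congrFun (hcv T) i]
  rw [SetLike.mem_coe, hv_sum]
  exact C.sum_mem fun S _ => C.smul_mem _ (hc S)

theorem stmt10_general {p k N n : ℕ}
    {F : Type*} [Field F]
    (C : Submodule (Fin N → F) (Fin n → Fin N → F)) :
    (C : Set (Fin n → Fin N → F)) =
        galoisDualSet (p ^ k) (C : Set (Fin n → Fin N → F)) ↔
      ∀ S : Fin N,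
        (fun ρ : Fin n → Fin N → F => fun i => ρ i S) ''
            (C : Set (Fin n → Fin N → F)) =
          galoisDualSet (p ^ k)
            ((fun ρ : Fin n → Fin N → F => fun i => ρ i S) ''
              (C : Set (Fin n → Fin N → F))) := by
  have hproj_ne : ∀ S : Fin N, ((Function.swap · S) '' (C : Set (Fin n → Fin N → F))).Nonempty :=
    fun S => ⟨0, 0, C.zero_mem, rfl⟩
  refine (Eq.congr C.coe_eq_swap_preimage_pi (galoisDualSet_eq_swap_preimage_pi _ _)).trans ?_
  rw [Function.swap_bijective.surjective.preimage_injective.eq_iff,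
    Set.univ_pi_eq_univ_pi_iff hproj_ne, funext_iff]

theorem stmt10 {p e k N n : ℕ} (hp : p.Prime) (he : 0 < e) (hk : k < e)
    {F : Type*} [Field F] [Fintype F] (hcard : Fintype.card F = p ^ e)
    (C : Submodule (Fin N → F) (Fin n → Fin N → F)) :
    (C : Set (Fin n → Fin N → F)) =
        galoisDualSet (p ^ k) (C : Set (Fin n → Fin N → F)) ↔
      ∀ S : Fin N,
        (fun ρ : Fin n → Fin N → F => fun i => ρ i S) ''
            (C : Set (Fin n → Fin N → F)) =
          galoisDualSet (p ^ k)
            ((fun ρ : Fin n → Fin N → F => fun i => ρ i S) ''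
              (C : Set (Fin n → Fin N → F))) :=
  stmt10_general C
end

section
/- Let q = p^e with p prime, 0 ≤ k < e, and let R = F_q^N be the product ring with componentwise operations. For every R-submodule C ⊆ R^n, dim_{F_q}(C) + dim_{F_q}(C^{⊥k,R}) = nN, where C and C^{⊥k,R} are regarded as F_q-vector spaces. -/
open Module

section Semilinear

variable {R S M N : Type*} [Semiring R] [Semiring S] [AddCommMonoid M] [AddCommMonoid N]
  [Module R M] [Module S N] {σ : R →+* S} {σ' : S →+* R}
  [RingHomInvPair σ σ'] [RingHomInvPair σ' σ]

theorem LinearEquiv.finrank_eq_of_semilinear (e : M ≃ₛₗ[σ] N) : finrank R M = finrank S N := by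
  have hσ : Function.Bijective σ := Function.bijective_iff_has_inverse.mpr
    ⟨σ', fun _ => RingHomInvPair.comp_apply_eq, fun _ => RingHomInvPair.comp_apply_eq₂⟩
  simpa only [finrank, Cardinal.toNat_lift] using
    congrArg Cardinal.toNat (lift_rank_eq_of_equiv_equiv σ e.toAddEquiv hσ e.map_smulₛₗ)

theorem Submodule.finrank_comap_linearEquiv (e : M ≃ₛₗ[σ] N) (W : Submodule S N) :
    finrank R (W.comap (e : M →ₛₗ[σ] N)) = finrank S W := by
  rw [Submodule.comap_equiv_eq_map_symm]
  exact ((e.symm.submoduleMap W).finrank_eq_of_semilinear).symm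

end Semilinear

theorem LinearMap.BilinForm.finrank_add_finrank_comap_orthogonal {K V : Type*} [Field K]
    [AddCommGroup V] [Module K V] [FiniteDimensional K V] {σ σ' : K →+* K}
    [RingHomInvPair σ σ'] [RingHomInvPair σ' σ] {B : LinearMap.BilinForm K V} (hB : B.Nondegenerate)
    (e : V ≃ₛₗ[σ] V) (W : Submodule K V) :
    finrank K W + finrank K ((B.orthogonal W).comap (e : V →ₛₗ[σ] V)) = finrank K V := by
  have := (B.orthogonal W).finrank_comap_linearEquiv e
  have := finrank_orthogonal hB W
  have := W.finrank_le
  omega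

section DotForm

variable {F : Type*} [Field F] {ι κ : Type*} [Fintype ι] [Fintype κ]

variable (F ι κ) in
def dotForm : LinearMap.BilinForm F (ι → κ → F) :=
  LinearMap.mk₂ F (fun u w => ∑ i, ∑ j, u i j * w i j)
    (fun u u' w => by simp only [Pi.add_apply, add_mul, Finset.sum_add_distrib])
    (fun a u w => by simp only [Pi.smul_apply, smul_eq_mul, Finset.mul_sum, mul_assoc])
    (fun u w w' => by simp only [Pi.add_apply, mul_add, Finset.sum_add_distrib])
    (fun a u w => by simp only [Pi.smul_apply, smul_eq_mul, Finset.mul_sum, mul_left_comm])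

theorem dotForm_apply (u w : ι → κ → F) : dotForm F ι κ u w = ∑ i, ∑ j, u i j * w i j := rfl

theorem dotForm_nondegenerate : (dotForm F ι κ).Nondegenerate := by
  classical
  constructor <;>
  · intro u hu
    funext i j
    simpa [dotForm_apply, Pi.single_apply, ite_apply, mul_ite, ite_mul, Finset.sum_ite_eq']
      using hu (Pi.single i (Pi.single j 1))

theorem mem_dotForm_orthogonal_iff (C : Submodule (κ → F) (ι → κ → F)) (w : ι → κ → F) :
    w ∈ (dotForm F ι κ).orthogonal (C.restrictScalars F) ↔ ∀ c ∈ C, ∑ i, c i * w i = 0 := by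
  classical
  simp only [LinearMap.BilinForm.mem_orthogonal_iff, Submodule.restrictScalars_mem, dotForm_apply]
  refine ⟨fun h c hc => funext fun j => ?_, fun h c hc => ?_⟩
  · simpa [Pi.single_apply, ite_mul, Finset.sum_apply] using h _ (C.smul_mem (Pi.single j 1) hc)
  · rw [Finset.sum_comm]
    exact Finset.sum_eq_zero fun j _ => by simpa [Finset.sum_apply] using congrFun (h c hc) j

variable (ι κ) in
def entrywiseSemilinearEquiv (σ σ' : F →+* F) [RingHomInvPair σ σ'] [RingHomInvPair σ' σ] :
    (ι → κ → F) ≃ₛₗ[σ] (ι → κ → F) where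
  toFun v i j := σ (v i j)
  invFun v i j := σ' (v i j)
  map_add' u v := by ext; simp
  map_smul' a v := by ext; simp
  left_inv v := by ext; simp
  right_inv v := by ext; simp

end DotForm

theorem stmt12_general {p e k N n : ℕ} (hp : p.Prime)
    {F : Type*} [Field F] [Fintype F] (hcard : Fintype.card F = p ^ e)
    (C : Submodule (Fin N → F) (Fin n → Fin N → F)) :
    ∃ D : Submodule F (Fin n → Fin N → F),
      (D : Set (Fin n → Fin N → F)) =
          galoisDualSet (p ^ k) (C : Set (Fin n → Fin N → F)) ∧
        Module.finrank F (C.restrictScalars F) + Module.finrank F D = n * N := by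
  have := Fact.mk hp
  have := charP_of_card_eq_prime_pow hcard
  let σ := iterateFrobeniusEquiv F p k
  let _ := RingHomInvPair.of_ringEquiv σ
  let _ := RingHomInvPair.symm (σ : F →+* F) σ.symm
  refine ⟨((dotForm F (Fin n) (Fin N)).orthogonal (C.restrictScalars F)).comap
    (entrywiseSemilinearEquiv (Fin n) (Fin N) (σ : F →+* F) σ.symm : _ →ₛₗ[(σ : F →+* F)] _),
    ?_, ?_⟩
  · ext v
    -- `σ (v i j)` unfolds to `(v i ^ p ^ k) j`
    exact mem_dotForm_orthogonal_iff C _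
  · rw [LinearMap.BilinForm.finrank_add_finrank_comap_orthogonal dotForm_nondegenerate]
    simp [Module.finrank_pi_fintype]

theorem stmt12 {p e k N n : ℕ} (hp : p.Prime) (he : 0 < e) (hk : k < e)
    {F : Type*} [Field F] [Fintype F] (hcard : Fintype.card F = p ^ e)
    (C : Submodule (Fin N → F) (Fin n → Fin N → F)) :
    ∃ D : Submodule F (Fin n → Fin N → F),
      (D : Set (Fin n → Fin N → F)) =
          galoisDualSet (p ^ k) (C : Set (Fin n → Fin N → F)) ∧
        Module.finrank F (C.restrictScalars F) + Module.finrank F D = n * N :=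
  stmt12_general hp hcard C
end

section
/- Let q = p^e with p prime, 0 ≤ k < e, and let R = F_q^N be the product ring with componentwise operations. Let M be an invertible N×N matrix over F_q and γ ∈ F_q^* with M·(M^{(p^k)})^T = γ·I_N. Define the Gray map ψ : R^n → F_q^{nN} by sending ρ = (ρ_0,…,ρ_{n−1}), each ρ_i ∈ F_q^N, to the concatenation of the row vectors ρ_0 M, ρ_1 M, …, ρ_{n−1} M. Then for every R-submodule C ⊆ R^n, ψ(C^{⊥k,R}) = ψ(C)^{⊥k}, where ψ(C)^{⊥k} is the k-Galois dual of the linear code ψ(C) inside F_q^{nN}. -/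
open Matrix

/-- The Gray map `ψ : (F^N)^n → F^(nN)` sending `ρ = (ρ_0, …, ρ_{n-1})` to the
concatenation of the row vectors `ρ_0 M, ρ_1 M, …, ρ_{n-1} M`. -/
def grayMap {F : Type*} [Field F] {N n : ℕ} (M : Matrix (Fin N) (Fin N) F)
    (ρ : Fin n → Fin N → F) : Fin (n * N) → F :=
  fun idx =>
    have hN : 0 < N := by
      rcases Nat.eq_zero_or_pos N with h | h
      · exact absurd idx.isLt (by simp [h])
      · exact h
    Matrix.vecMul
      (ρ ⟨(idx : ℕ) / N, Nat.div_lt_of_lt_mul (Nat.mul_comm n N ▸ idx.isLt)⟩) M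
      ⟨(idx : ℕ) % N, Nat.mod_lt _ hN⟩

lemma grayMap_apply' {F : Type*} [Field F] {N n : ℕ} (M : Matrix (Fin N) (Fin N) F)
    (ρ : Fin n → Fin N → F) (i : Fin n) (j : Fin N) :
    grayMap M ρ (finProdFinEquiv (i, j)) = Matrix.vecMul (ρ i) M j := by
  have hN : 0 < N := j.pos
  have hdiv : ((j : ℕ) + N * (i : ℕ)) / N = i := by
    rw [Nat.add_mul_div_left _ _ hN, Nat.div_eq_of_lt j.isLt, Nat.zero_add]
  have hmod : ((j : ℕ) + N * (i : ℕ)) % N = j := by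
    rw [Nat.add_mul_mod_self_left, Nat.mod_eq_of_lt j.isLt]
  simp only [grayMap, finProdFinEquiv_apply_val]
  congr 1
  · exact congrArg ρ (Fin.ext hdiv)
  · exact Fin.ext hmod

theorem stmt14 {p e k N n : ℕ} (hp : p.Prime) (he : 0 < e) (hk : k < e)
    {F : Type*} [Field F] [Fintype F] (hcard : Fintype.card F = p ^ e)
    (M : Matrix (Fin N) (Fin N) F) (hM : IsUnit M) (γ : F) (hγ : γ ≠ 0)
    (hMg : M * (M.map fun x => x ^ p ^ k)ᵀ = γ • (1 : Matrix (Fin N) (Fin N) F))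
    (C : Submodule (Fin N → F) (Fin n → Fin N → F)) :
    grayMap M '' galoisDualSet (p ^ k) (C : Set (Fin n → Fin N → F)) =
      galoisDualSet (p ^ k) (grayMap M '' (C : Set (Fin n → Fin N → F))) := by
  haveI := Fact.mk hp
  -- characteristic of F is p
  have hdvd : p ∣ ringChar F := (prime_dvd_char_iff_dvd_card p).mpr
    (hcard ▸ dvd_pow_self p he.ne')
  have hrc : (ringChar F).Prime := CharP.char_is_prime F (ringChar F)
  have hpe : p = ringChar F := (Nat.prime_dvd_prime_iff_eq hp hrc).mp hdvd
  haveI : CharP F p := by rw [hpe]; exact ringChar.charP F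
  haveI : ExpChar F p := ExpChar.prime hp
  set pk := p ^ k with hpk
  -- Frobenius additivity over sums
  have hfrob : ∀ (s : Finset (Fin N)) (f : Fin N → F),
      (∑ l ∈ s, f l) ^ pk = ∑ l ∈ s, f l ^ pk := by
    intro s f
    exact map_sum (iterateFrobenius F p k) f s
  set M' : Matrix (Fin N) (Fin N) F := M.map fun x => x ^ pk with hM'
  -- key: the Gray images' inner product
  have hvecpow : ∀ (x : Fin N → F) (j : Fin N),
      (Matrix.vecMul x M j) ^ pk = Matrix.vecMul (fun l => x l ^ pk) M' j := by
    intro x j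
    show (∑ l, x l * M l j) ^ pk = ∑ l, (x l ^ pk) * M' l j
    rw [hfrob]
    refine Finset.sum_congr rfl fun l _ => ?_
    simp [hM', Matrix.map_apply, mul_pow]
  have hkey : ∀ (a b : Fin N → F),
      ∑ j, Matrix.vecMul a M j * (Matrix.vecMul b M j) ^ pk
        = γ * ∑ j, a j * b j ^ pk := by
    intro a b
    have : ∑ j, Matrix.vecMul a M j * (Matrix.vecMul b M j) ^ pk
        = Matrix.vecMul a M ⬝ᵥ Matrix.vecMul (fun l => b l ^ pk) M' := by
      refine Finset.sum_congr rfl fun j _ => by rw [hvecpow]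
    rw [this, show ((fun l => b l ^ pk) ᵥ* M') = M'ᵀ *ᵥ (fun l => b l ^ pk) from
      (Matrix.mulVec_transpose M' _).symm, Matrix.dotProduct_mulVec,
      Matrix.vecMul_vecMul, hMg]
    have h1 : a ᵥ* (γ • (1 : Matrix (Fin N) (Fin N) F)) = γ • a := by
      funext j
      simp [Matrix.vecMul, dotProduct, Matrix.smul_apply, Matrix.one_apply,
        mul_ite, mul_comm]
    rw [h1, smul_dotProduct]
    simp [dotProduct, smul_eq_mul, Finset.mul_sum]
  have hinner : ∀ (c v : Fin n → Fin N → F),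
      ∑ idx, grayMap M c idx * grayMap M v idx ^ pk
        = γ * ∑ i, ∑ j, c i j * v i j ^ pk := by
    intro c v
    rw [← Equiv.sum_comp finProdFinEquiv
      (fun idx => grayMap M c idx * grayMap M v idx ^ pk), Fintype.sum_prod_type]
    rw [Finset.mul_sum]
    refine Finset.sum_congr rfl fun i _ => ?_
    simp only [grayMap_apply']
    exact hkey (c i) (v i)
  ext w
  constructor
  · rintro ⟨v, hv, rfl⟩
    rintro cw ⟨c, hc, rfl⟩
    rw [hinner]
    have h0 : ∀ j, ∑ i, c i j * v i j ^ pk = 0 := by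
      intro j
      have := congrFun (hv c hc) j
      simpa [Finset.sum_apply] using this
    rw [Finset.sum_comm]
    simp [h0]
  · intro hw
    -- invert the Gray map
    have hdet : IsUnit M.det := (Matrix.isUnit_iff_isUnit_det M).mp hM
    set v : Fin n → Fin N → F :=
      fun i => Matrix.vecMul (fun j => w (finProdFinEquiv (i, j))) M⁻¹ with hvdef
    have hwv : grayMap M v = w := by
      funext idx
      obtain ⟨⟨i, j⟩, rfl⟩ := finProdFinEquiv.surjective idx
      rw [grayMap_apply', hvdef]
      rw [Matrix.vecMul_vecMul, Matrix.nonsing_inv_mul M hdet, Matrix.vecMul_one]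
    refine ⟨v, ?_, hwv⟩
    intro c hc
    funext j
    set c' : Fin n → Fin N → F := (Pi.single j (1:F) : Fin N → F) • c with hc'def
    have hc' : c' ∈ C := Submodule.smul_mem C _ hc
    have hmem : grayMap M c' ∈ grayMap M '' (C : Set (Fin n → Fin N → F)) :=
      ⟨c', hc', rfl⟩
    have := hw _ hmem
    rw [← hwv, hinner] at this
    have hz : ∑ i, ∑ j', c' i j' * v i j' ^ pk = 0 :=
      (mul_eq_zero.mp this).resolve_left hγ
    have hsimp : ∀ i : Fin n, ∑ j', c' i j' * v i j' ^ pk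
        = c i j * v i j ^ pk := by
      intro i
      rw [Finset.sum_eq_single j]
      · simp [hc'def, Pi.smul_apply, Pi.single_apply]
      · intro b _ hb
        simp [hc'def, Pi.smul_apply, Pi.single_apply, hb]
      · simp
    simp only [hsimp] at hz
    simpa [Finset.sum_apply] using hz
end

section
/- Let q = p^e with p prime, 0 ≤ k < e, and let R = F_q^N be the product ring with componentwise operations. Let M be an invertible N×N matrix over F_q and γ ∈ F_q^* with M·(M^{(p^k)})^T = γ·I_N, and let ψ : R^n → F_q^{nN} be the Gray map sending ρ = (ρ_0,…,ρ_{n−1}) to the concatenation of ρ_0 M, …, ρ_{n−1} M. Then for every R-submodule C ⊆ R^n, ψ(C ∩ C^{⊥k,R}) = ψ(C) ∩ ψ(C)^{⊥k}; that is, the Gray image of the k-Galois hull of C equals the k-Galois hull of the Gray image ψ(C). -/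
open Matrix

lemma grayMap_def {F : Type*} [Field F] {N n : ℕ}
    (M : Matrix (Fin N) (Fin N) F) (ρ : Fin n → Fin N → F) (idx : Fin (n * N))
    (h1 : (idx : ℕ) / N < n) (h2 : (idx : ℕ) % N < N) :
    grayMap M ρ idx = Matrix.vecMul (ρ ⟨(idx : ℕ) / N, h1⟩) M ⟨(idx : ℕ) % N, h2⟩ :=
  rfl

lemma grayMap_apply_prod {F : Type*} [Field F] {N n : ℕ}
    (M : Matrix (Fin N) (Fin N) F) (ρ : Fin n → Fin N → F) (i : Fin n) (s : Fin N) :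
    grayMap M ρ (finProdFinEquiv (i, s)) = Matrix.vecMul (ρ i) M s := by
  obtain ⟨iv, hiv⟩ := i
  obtain ⟨sv, hsv⟩ := s
  have hN : 0 < N := Nat.lt_of_le_of_lt (Nat.zero_le sv) hsv
  have h1 : ((finProdFinEquiv (⟨iv, hiv⟩, ⟨sv, hsv⟩) : Fin (n * N)) : ℕ) / N = iv := by
    simp [finProdFinEquiv, Nat.add_mul_div_left _ _ hN, Nat.div_eq_of_lt hsv]
  have h2 : ((finProdFinEquiv (⟨iv, hiv⟩, ⟨sv, hsv⟩) : Fin (n * N)) : ℕ) % N = sv := by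
    simp [finProdFinEquiv, Nat.add_mul_mod_self_left, Nat.mod_eq_of_lt hsv]
  rw [grayMap_def M ρ _ (by rw [h1]; exact hiv) (by rw [h2]; exact hsv)]
  simp only [h1, h2]

lemma gray_inner {p k N n : ℕ} {F : Type*} [Field F] (hp : p.Prime) (hc : CharP F p)
    (M : Matrix (Fin N) (Fin N) F) (γ : F)
    (hMg : M * (M.map fun x => x ^ p ^ k)ᵀ = γ • (1 : Matrix (Fin N) (Fin N) F))
    (c v : Fin n → Fin N → F) :
    ∑ idx, grayMap M c idx * grayMap M v idx ^ p ^ k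
      = γ * ∑ j, ∑ i, c i j * v i j ^ p ^ k := by
  haveI := Fact.mk hp
  haveI : ExpChar F p := ExpChar.prime hp
  have hsum : ∑ idx, grayMap M c idx * grayMap M v idx ^ p ^ k
      = ∑ x : Fin n × Fin N,
          Matrix.vecMul (c x.1) M x.2 * (Matrix.vecMul (v x.1) M x.2) ^ p ^ k := by
    rw [← Equiv.sum_comp finProdFinEquiv
      (fun idx => grayMap M c idx * grayMap M v idx ^ p ^ k)]
    refine Finset.sum_congr rfl fun x _ => ?_
    rw [← Prod.mk.eta (p := x), grayMap_apply_prod, grayMap_apply_prod]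
  rw [hsum, Fintype.sum_prod_type]
  have key : ∀ i : Fin n,
      ∑ s : Fin N, Matrix.vecMul (c i) M s * (Matrix.vecMul (v i) M s) ^ p ^ k
        = γ * ∑ j, c i j * v i j ^ p ^ k := by
    intro i
    have hfro : ∀ s, (Matrix.vecMul (v i) M s) ^ p ^ k
        = Matrix.vecMul (fun j => v i j ^ p ^ k) (M.map fun x => x ^ p ^ k) s := by
      intro s
      have : (Matrix.vecMul (v i) M s) ^ p ^ k
          = iterateFrobenius F p k (Matrix.vecMul (v i) M s) := by
        rw [iterateFrobenius_def]
      rw [this]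
      simp only [Matrix.vecMul, dotProduct, map_sum,
        iterateFrobenius_def, mul_pow, Matrix.map_apply]
    calc ∑ s, Matrix.vecMul (c i) M s * (Matrix.vecMul (v i) M s) ^ p ^ k
        = dotProduct (Matrix.vecMul (c i) M)
            (Matrix.vecMul (fun j => v i j ^ p ^ k) (M.map fun x => x ^ p ^ k)) := by
          simp only [dotProduct]
          exact Finset.sum_congr rfl fun s _ => by rw [hfro]
      _ = γ * ∑ j, c i j * v i j ^ p ^ k := by
          have hb : Matrix.vecMul (fun j => v i j ^ p ^ k) (M.map fun x => x ^ p ^ k)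
              = Matrix.mulVec (M.map fun x => x ^ p ^ k)ᵀ (fun j => v i j ^ p ^ k) :=
            (Matrix.mulVec_transpose _ _).symm
          rw [hb, Matrix.dotProduct_mulVec, Matrix.vecMul_vecMul, hMg]
          simp only [dotProduct, Finset.mul_sum]
          refine Finset.sum_congr rfl fun x _ => ?_
          have hx : (Matrix.vecMul (c i) (γ • (1 : Matrix (Fin N) (Fin N) F))) x
              = γ * c i x := by
            simp [Matrix.vecMul, dotProduct, Matrix.one_apply, Matrix.smul_apply,
              smul_eq_mul, mul_ite, mul_comm, Finset.sum_ite_eq, Finset.sum_ite_eq']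
          rw [hx]; ring
  calc ∑ i, ∑ s, Matrix.vecMul (c i) M s * (Matrix.vecMul (v i) M s) ^ p ^ k
      = ∑ i, γ * ∑ j, c i j * v i j ^ p ^ k := Finset.sum_congr rfl fun i _ => key i
    _ = γ * ∑ j, ∑ i, c i j * v i j ^ p ^ k := by
        rw [← Finset.mul_sum, Finset.sum_comm]

theorem stmt15 {p e k N n : ℕ} (hp : p.Prime) (he : 0 < e) (hk : k < e)
    {F : Type*} [Field F] [Fintype F] (hcard : Fintype.card F = p ^ e)
    (M : Matrix (Fin N) (Fin N) F) (hM : IsUnit M) (γ : F) (hγ : γ ≠ 0)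
    (hMg : M * (M.map fun x => x ^ p ^ k)ᵀ = γ • (1 : Matrix (Fin N) (Fin N) F))
    (C : Submodule (Fin N → F) (Fin n → Fin N → F)) :
    grayMap M ''
        ((C : Set (Fin n → Fin N → F)) ∩
          galoisDualSet (p ^ k) (C : Set (Fin n → Fin N → F))) =
      (grayMap M '' (C : Set (Fin n → Fin N → F))) ∩
        galoisDualSet (p ^ k) (grayMap M '' (C : Set (Fin n → Fin N → F))) := by
  -- char F = p
  have hc : CharP F p := by
    have hcr : CharP F (ringChar F) := ringChar.charP F
    obtain ⟨m, hpr, hcard'⟩ := FiniteField.card F (ringChar F)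
    have : p ∣ ringChar F := by
      have : p ∣ ringChar F ^ (m : ℕ) := by
        rw [← hcard', hcard]
        exact dvd_pow_self p he.ne'
      exact hp.dvd_of_dvd_pow this
    have hpe : p = ringChar F := ((Nat.prime_dvd_prime_iff_eq hp hpr).mp this)
    rwa [hpe]
  ext w
  constructor
  · rintro ⟨v, ⟨hvC, hvD⟩, rfl⟩
    refine ⟨⟨v, hvC, rfl⟩, ?_⟩
    rintro c' ⟨c, hcC, rfl⟩
    rw [gray_inner hp hc M γ hMg]
    have h0 : ∀ j, ∑ i, c i j * v i j ^ p ^ k = 0 := by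
      intro j
      have := hvD c hcC
      have := congrFun this j
      simpa [Finset.sum_apply] using this
    simp [h0]
  · rintro ⟨⟨v, hvC, rfl⟩, hdual⟩
    refine ⟨v, ⟨hvC, ?_⟩, rfl⟩
    intro c hcC
    funext j
    -- use the scalar e_j = Pi.single j 1
    set ej : Fin N → F := Pi.single j (1 : F) with hej
    have hcC' : ej • c ∈ (C : Set (Fin n → Fin N → F)) :=
      C.smul_mem ej hcC
    have hmem : grayMap M (ej • c)
        ∈ grayMap M '' (C : Set (Fin n → Fin N → F)) :=
      ⟨ej • c, hcC', rfl⟩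
    have := hdual _ hmem
    rw [gray_inner hp hc M γ hMg] at this
    have hsum : ∑ j', ∑ i, (ej • c) i j' * v i j' ^ p ^ k
        = ∑ i, c i j * v i j ^ p ^ k := by
      rw [Finset.sum_comm]
      refine Finset.sum_congr rfl fun i _ => ?_
      have : ∀ j', (ej • c) i j'
          = if j' = j then c i j else 0 := by
        intro j'
        by_cases h : j' = j <;> simp [hej, h, Pi.single_apply]
      simp [this, ite_mul, Finset.sum_ite_eq']
    rw [hsum] at this
    have h0 : ∑ i, c i j * v i j ^ p ^ k = 0 := by
      rcases mul_eq_zero.mp this with h | h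
      · exact absurd h hγ
      · exact h
    simpa [Finset.sum_apply] using h0
end
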